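/- For nonnegative integers m, n and any j with 0 ≤ j ≤ m, the convolution coefficients are given by ρ_{j,n}^m = Σ_{ν=1}^{j} γ_{m−j+ν,0}^{(j−ν, j)} · (d^{ν−1} P_n/dx^{ν−1})(−a) + Σ_{ν=j+1}^{n+1} (d^{ν−1} P_n/dx^{ν−1})(−a) · Σ_{p=0}^{m} [b_{p+ν,j}/(p+ν)!] · (d^{p} P_m/dx^{p})(−a). -/

import Mathlib

/-!
Let `A_ν` be the `ν`-fold primitive of `P_m` vanishing to order `ν` at `-a`. Integrating by
parts `n + 1` times gives
`∫_{-a}^{x+a} P_m(x-t) P_n(t) dt = ∑_{ν=1}^{n+1} P_n^{(ν-1)}(-a) A_ν(x+a)`,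
so `ρ_j = ∑_ν P_n^{(ν-1)}(-a) [A_ν]_j`, where `[·]_j` is the `j`-th coordinate in the basis
`(P_k)`. For `ν > j` this coordinate is read off the expansion of `A_ν` in powers of `x + a`
and the coefficients `b`. For `ν ≤ j`, the `j`-th coordinate of `A_ν` is the `0`-th coordinate
of `d^j A_ν / dx^j = d^{j-ν} P_m / dx^{j-ν}` in the basis `(d^j P_{k+j} / dx^j)`, which is
`γ_0`.
-/

open Polynomial
open scoped Nat

lemma Finset.sum_Icc_one_eq_sum_Icc_add_sum_Icc {M : Type*} [AddCommMonoid M] {F : ℕ → M}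
    {N : ℕ} (hF : ∀ ν, N < ν → F ν = 0) (j : ℕ) :
    ∑ ν ∈ Icc 1 N, F ν = ∑ ν ∈ Icc 1 j, F ν + ∑ ν ∈ Icc (j + 1) N, F ν := by
  rcases le_total j N with hjN | hNj
  · rw [Icc_add_one_left_eq_Ioc, ← zero_add 1, Icc_add_one_left_eq_Ioc, Icc_add_one_left_eq_Ioc]
    exact (sum_Ioc_consecutive _ (Nat.zero_le j) hjN).symm
  · rw [Icc_eq_empty (a := j + 1) (by omega), sum_empty, add_zero]
    exact sum_subset (Icc_subset_Icc_right hNj) fun ν hν hν' => hF ν (by simp_all)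

section iteratedPrimitive

variable {K : Type*} [Field K]

/-- Taylor's formula for `f` at `c`, integrated `ν` times from `c`. -/
noncomputable def iteratedPrimitive (f : K[X]) (c : K) (ν : ℕ) : K[X] :=
  ∑ p ∈ Finset.range (f.natDegree + 1),
    C ((derivative^[p] f).eval c / (p + ν)!) * (X - C c) ^ (p + ν)

lemma eval_iteratedPrimitive_succ (f : K[X]) (c : K) (ν : ℕ) :
    (iteratedPrimitive f c (ν + 1)).eval c = 0 := by
  simp [iteratedPrimitive, eval_finsetSum]

variable [CharZero K]

lemma iteratedPrimitive_zero (f : K[X]) (c : K) : iteratedPrimitive f c 0 = f := by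
  have htaylor := sum_taylor_eq f c
  rw [sum_over_range' _ (by simp) (f.natDegree + 1)
    (by rw [natDegree_taylor]; omega)] at htaylor
  conv_rhs => rw [← htaylor]
  refine Finset.sum_congr rfl fun p _ => ?_
  have hhasse : (p ! : K) * (hasseDeriv p f).eval c = (derivative^[p] f).eval c := by
    rw [← factorial_smul_hasseDeriv, LinearMap.smul_apply, nsmul_eq_mul, eval_mul, eval_natCast]
  rw [taylor_coeff, add_zero, ← hhasse,
    mul_div_cancel_left₀ _ (by exact_mod_cast p.factorial_ne_zero)]

lemma derivative_iteratedPrimitive_succ (f : K[X]) (c : K) (ν : ℕ) :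
    derivative (iteratedPrimitive f c (ν + 1)) = iteratedPrimitive f c ν := by
  simp only [iteratedPrimitive, derivative_sum, derivative_C_mul, derivative_pow,
    derivative_sub, derivative_X, derivative_C, sub_zero, mul_one]
  refine Finset.sum_congr rfl fun p _ => ?_
  rw [← add_assoc, Nat.add_sub_cancel, ← mul_assoc, ← C_mul, Nat.factorial_succ]
  congr 2
  have : ((p + ν + 1 : ℕ) : K) ≠ 0 := Nat.cast_ne_zero.mpr (Nat.succ_ne_zero _)
  rw [Nat.cast_mul, div_mul_eq_mul_div, mul_comm _ ((p + ν + 1 : ℕ) : K),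
    mul_div_mul_left _ _ this]

lemma iterate_derivative_iteratedPrimitive (f : K[X]) (c : K) (ν : ℕ) :
    derivative^[ν] (iteratedPrimitive f c ν) = f := by
  induction ν with
  | zero => exact iteratedPrimitive_zero f c
  | succ ν ih => rw [Function.iterate_succ_apply, derivative_iteratedPrimitive_succ, ih]

end iteratedPrimitive

lemma derivative_sum_comp_mul_iterate_derivative {R : Type*} [CommRing R] (A : ℕ → R[X])
    (hA : ∀ i, derivative (A (i + 1)) = A i) {q : R[X]} (hq : derivative q = -1) (g : R[X]) :
    derivative (∑ i ∈ Finset.range (g.natDegree + 1), (A (i + 1)).comp q * derivative^[i] g) =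
      -((A 0).comp q * g) := by
  set v : ℕ → R[X] := fun i => (A i).comp q * derivative^[i] g
  have htelescope :
      ∀ i, derivative ((A (i + 1)).comp q * derivative^[i] g) = v (i + 1) - v i := by
    intro i
    simp only [v, derivative_mul, derivative_comp, hA, hq, Function.iterate_succ_apply']
    ring
  have hlast : v (g.natDegree + 1) = 0 := by
    simp [v, iterate_derivative_eq_zero (lt_add_one g.natDegree)]
  rw [derivative_sum, Finset.sum_congr rfl fun i _ => htelescope i, Finset.sum_range_sub, hlast,
    zero_sub]
  simp [v]

lemma integral_eval_derivative_ofReal (S : ℂ[X]) (u v : ℝ) :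
    ∫ t in u..v, (derivative S).eval (t : ℂ) = S.eval (v : ℂ) - S.eval (u : ℂ) :=
  intervalIntegral.integral_eq_sub_of_hasDerivAt
    (fun t _ => (S.hasDerivAt (t : ℂ)).comp_ofReal)
    ((S.derivative.continuous.comp Complex.continuous_ofReal).intervalIntegrable u v)

lemma integral_eval_sub_mul_eval (f g : ℂ[X]) (c x : ℝ) :
    ∫ t in c..(x - c), f.eval ((x : ℂ) - t) * g.eval (t : ℂ) =
      ∑ i ∈ Finset.range (g.natDegree + 1),
        (derivative^[i] g).eval (c : ℂ) *
          (iteratedPrimitive f c (i + 1)).eval ((x : ℂ) - c) := by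
  set q : ℂ[X] := C (x : ℂ) - X
  set W := ∑ i ∈ Finset.range (g.natDegree + 1),
    (iteratedPrimitive f c (i + 1)).comp q * derivative^[i] g
  have hW : derivative W = -(f.comp q * g) := by
    rw [derivative_sum_comp_mul_iterate_derivative _ (derivative_iteratedPrimitive_succ f c)
      (by simp [q]), iteratedPrimitive_zero]
  have hintegrand :
      ∀ t : ℝ, f.eval ((x : ℂ) - t) * g.eval (t : ℂ) = -(derivative W).eval (t : ℂ) := by
    intro t
    simp [hW, q]
  have hupper : W.eval (((x - c : ℝ)) : ℂ) = 0 := by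
    refine (eval_finsetSum _ _ _).trans (Finset.sum_eq_zero fun i _ => ?_)
    simp [q, eval_iteratedPrimitive_succ]
  have hlower : W.eval (c : ℂ) = ∑ i ∈ Finset.range (g.natDegree + 1),
      (derivative^[i] g).eval (c : ℂ) * (iteratedPrimitive f c (i + 1)).eval ((x : ℂ) - c) := by
    simp [W, q, eval_finsetSum, mul_comm]
  simp only [hintegrand, intervalIntegral.integral_neg, integral_eval_derivative_ofReal, hupper,
    hlower, zero_sub, neg_neg]

namespace Polynomial.Sequence

variable {K : Type*} [Field K]

lemma isUnit_leadingCoeff (S : Sequence K) (i : ℕ) : IsUnit (S i).leadingCoeff :=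
  (leadingCoeff_ne_zero.mpr (S.ne_zero i)).isUnit

lemma basis_repr_sum_C_mul (S : Sequence K) (s : Finset ℕ) (e : ℕ → K) (j : ℕ) :
    (S.basis S.isUnit_leadingCoeff).repr (∑ k ∈ s, C (e k) * S k) j =
      if j ∈ s then e j else 0 := by
  simp only [C_mul', ← S.basis_eq_self S.isUnit_leadingCoeff, map_sum, map_smul,
    Module.Basis.repr_self, Finsupp.coe_finsetSum, Finset.sum_apply, Finsupp.smul_apply,
    Finsupp.single_apply, smul_eq_mul, mul_ite, mul_one, mul_zero]
  simp

variable [CharZero K]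

noncomputable def iterateDerivative (S : Sequence K) (j : ℕ) : Sequence K where
  elems' k := derivative^[j] (S (k + j))
  degree_eq' k := by
    refine degree_eq_of_le_of_coeff_ne_zero ?_ ?_
    · refine (degree_le_natDegree).trans (WithBot.coe_le_coe.mpr ?_)
      have := natDegree_iterate_derivative (S (k + j)) j
      rwa [S.natDegree_eq, Nat.add_sub_cancel] at this
    · rw [coeff_iterate_derivative, nsmul_eq_mul]
      refine mul_ne_zero (Nat.cast_ne_zero.mpr (Nat.descFactorial_pos.mpr ?_).ne') ?_
      · omega
      · have := leadingCoeff_ne_zero.mpr (S.ne_zero (k + j))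
        rwa [leadingCoeff, S.natDegree_eq] at this

lemma iterateDerivative_apply (S : Sequence K) (j k : ℕ) :
    S.iterateDerivative j k = derivative^[j] (S (k + j)) := rfl

lemma basis_repr_iterate_derivative (S : Sequence K) (j : ℕ) (f : K[X]) (k : ℕ) :
    ((S.iterateDerivative j).basis (isUnit_leadingCoeff _)).repr (derivative^[j] f) k =
      (S.basis S.isUnit_leadingCoeff).repr f (k + j) := by
  set B := S.basis S.isUnit_leadingCoeff
  set B' := (S.iterateDerivative j).basis (isUnit_leadingCoeff _)
  have hext : Finsupp.lapply k ∘ₗ B'.repr.toLinearMap ∘ₗ derivative ^ j =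
      Finsupp.lapply (k + j) ∘ₗ B.repr.toLinearMap := by
    refine B.ext fun i => ?_
    simp only [LinearMap.comp_apply, Module.End.pow_apply, LinearEquiv.coe_coe,
      Module.Basis.repr_self, Finsupp.lapply_apply, B]
    rw [S.basis_eq_self]
    rcases lt_or_ge i j with hij | hji
    · rw [iterate_derivative_eq_zero (by rwa [S.natDegree_eq]), map_zero,
        Finsupp.single_eq_of_ne (by omega)]
      rfl
    · obtain ⟨i, rfl⟩ := Nat.exists_eq_add_of_le' hji
      rw [← iterateDerivative_apply,
        ← (S.iterateDerivative j).basis_eq_self (isUnit_leadingCoeff _),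
        Module.Basis.repr_self]
      simp [Finsupp.single_apply]
  simpa [Module.End.pow_apply] using LinearMap.congr_fun hext f

lemma basis_repr_iteratedPrimitive_of_le (S : Sequence K) {f : K[X]} {c : K} {ν j : ℕ}
    (hν : ν ≤ j) {γ : ℕ → K} {M : ℕ}
    (hγ : derivative^[j - ν] f =
      ∑ k ∈ Finset.range (M + 1), C (γ k) * derivative^[j] (S (k + j))) :
    (S.basis S.isUnit_leadingCoeff).repr (iteratedPrimitive f c ν) j = γ 0 := by
  obtain ⟨k, rfl⟩ := Nat.exists_eq_add_of_le' hν
  rw [Nat.add_sub_cancel] at hγ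
  rw [← zero_add (k + ν), ← basis_repr_iterate_derivative, Function.iterate_add_apply,
    iterate_derivative_iteratedPrimitive, hγ]
  exact (S.iterateDerivative (k + ν)).basis_repr_sum_C_mul _ γ 0 |>.trans (if_pos (by simp))

lemma basis_repr_iteratedPrimitive_of_ge (S : Sequence K) {f : K[X]} {c : K} {ν j : ℕ}
    (hj : j ≤ ν) {b : ℕ → ℕ → K}
    (hb : ∀ N, (X - C c) ^ N = ∑ k ∈ Finset.range (N + 1), C (b N k) * S k) :
    (S.basis S.isUnit_leadingCoeff).repr (iteratedPrimitive f c ν) j =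
      ∑ p ∈ Finset.range (f.natDegree + 1),
        b (p + ν) j / ((p + ν)! : K) * (derivative^[p] f).eval c := by
  rw [iteratedPrimitive, map_sum, Finsupp.coe_finsetSum, Finset.sum_apply]
  refine Finset.sum_congr rfl fun p _ => ?_
  rw [hb, C_mul', map_smul, Finsupp.smul_apply, basis_repr_sum_C_mul,
    if_pos (Finset.mem_range.mpr (by omega)), smul_eq_mul]
  ring

lemma convolution_coeff_eq_sum_basis_repr (S : Sequence ℂ) (a : ℝ) (m n : ℕ) (ρ : ℕ → ℂ)
    (hρ : ∀ x : ℝ,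
      (∫ t in (-a)..(x + a), (S m).eval ((x : ℂ) - (t : ℂ)) * (S n).eval (t : ℂ)) =
        ∑ j ∈ Finset.range (m + n + 2), ρ j * (S j).eval ((x : ℂ) + (a : ℂ)))
    {j : ℕ} (hj : j < m + n + 2) :
    ρ j = ∑ ν ∈ Finset.Icc 1 (n + 1), (derivative^[ν - 1] (S n)).eval (-(a : ℂ)) *
      (S.basis S.isUnit_leadingCoeff).repr (iteratedPrimitive (S m) (-(a : ℂ)) ν) j := by
  have hpoly : ∑ k ∈ Finset.range (m + n + 2), C (ρ k) * S k =
      ∑ i ∈ Finset.range (n + 1), C ((derivative^[i] (S n)).eval (-(a : ℂ))) *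
        iteratedPrimitive (S m) (-(a : ℂ)) (i + 1) := by
    refine eq_of_infinite_eval_eq _ _ (Set.infinite_of_injective_forall_mem
      (f := fun x : ℝ => (x : ℂ) + a) (fun x y h => by simpa using h) fun x => ?_)
    have hconv := integral_eval_sub_mul_eval (S m) (S n) (-a) x
    simp only [Complex.ofReal_neg, sub_neg_eq_add, S.natDegree_eq] at hconv
    simp only [Set.mem_ofPred_eq, eval_finsetSum, eval_mul, eval_C, ← hρ x, hconv]
  have := congrArg (fun p => (S.basis S.isUnit_leadingCoeff).repr p j) hpoly
  simp only [basis_repr_sum_C_mul, Finset.mem_range, hj, if_true] at this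
  rw [← Finset.Ico_add_one_right_eq_Icc, Finset.sum_Ico_eq_sum_range]
  simpa [C_mul', map_sum, Finsupp.coe_finsetSum, add_comm 1] using this

end Polynomial.Sequence

/-- **Theorem (convolution coefficients for `0 ≤ j ≤ m`).**
Let `P k` be a polynomial sequence with `deg P k = k`, `a` a real constant, `b N k` the
connection coefficients of `(x+a)^N` in the basis `P k`, `γ r s (N-r) k` the connection
coefficients of `d^r P_N/dx^r` in the basis `d^s P_{k+s}/dx^s`, and `ρ j` the coefficients
of the expansion of `∫_{-a}^{x+a} P_m(x-t) P_n(t) dt` in `P j (x+a)`.  Then for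
`0 ≤ j ≤ m`,
`ρ j = ∑_{ν=1}^{j} γ_{m-j+ν,0}^{(j-ν,j)} (d^{ν-1}P_n/dx^{ν-1})(-a)
   + ∑_{ν=j+1}^{n+1} (d^{ν-1}P_n/dx^{ν-1})(-a) ∑_{p=0}^{m} (b_{p+ν,j}/(p+ν)!)
     (d^{p}P_m/dx^{p})(-a)`. -/
theorem stmt5
    (P : ℕ → Polynomial ℂ) (hP : ∀ k, (P k).degree = (k : WithBot ℕ))
    (a : ℝ)
    (b : ℕ → ℕ → ℂ)
    (hb : ∀ N, (Polynomial.X + Polynomial.C (a : ℂ)) ^ N =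
      ∑ k ∈ Finset.range (N + 1), Polynomial.C (b N k) * P k)
    (γ : ℕ → ℕ → ℕ → ℕ → ℂ)
    (hγ : ∀ r s N, r ≤ N → Polynomial.derivative^[r] (P N) =
      ∑ k ∈ Finset.range (N - r + 1),
        Polynomial.C (γ r s (N - r) k) * Polynomial.derivative^[s] (P (k + s)))
    (m n : ℕ) (ρ : ℕ → ℂ)
    (hρ : ∀ x : ℝ,
      (∫ t in (-a)..(x + a), (P m).eval ((x : ℂ) - (t : ℂ)) * (P n).eval (t : ℂ)) =
        ∑ j ∈ Finset.range (m + n + 2), ρ j * (P j).eval ((x : ℂ) + (a : ℂ)))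
    (j : ℕ) (hj : j ≤ m) :
    ρ j = (∑ ν ∈ Finset.Icc 1 j,
        γ (j - ν) j (m + ν - j) 0 *
          (Polynomial.derivative^[ν - 1] (P n)).eval (-(a : ℂ)))
      + ∑ ν ∈ Finset.Icc (j + 1) (n + 1),
          (Polynomial.derivative^[ν - 1] (P n)).eval (-(a : ℂ)) *
            ∑ p ∈ Finset.range (m + 1),
              b (p + ν) j / ((p + ν).factorial : ℂ) *
                (Polynomial.derivative^[p] (P m)).eval (-(a : ℂ)) := by
  set S : Sequence ℂ := ⟨P, hP⟩
  have hPm : (P m).natDegree = m := S.natDegree_eq m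
  rw [S.convolution_coeff_eq_sum_basis_repr a m n ρ hρ (by omega),
    Finset.sum_Icc_one_eq_sum_Icc_add_sum_Icc (fun ν hν => by
      rw [iterate_derivative_eq_zero (by rw [S.natDegree_eq]; omega), eval_zero, zero_mul]) j]
  congr 1
  · refine Finset.sum_congr rfl fun ν hν => ?_
    rw [Finset.mem_Icc] at hν
    rw [mul_comm, S.basis_repr_iteratedPrimitive_of_le hν.2
      (by rw [hγ (j - ν) j m (by omega), show m - (j - ν) = m + ν - j by omega])]
  · refine Finset.sum_congr rfl fun ν hν => ?_
    rw [Finset.mem_Icc] at hν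
    rw [S.basis_repr_iteratedPrimitive_of_ge (by omega) (fun N => by simpa using hb N), hPm]
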